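/- Suppose dom A is partitioned into lumps {V}_{V∈𝒱} such that for all U,V ∈ 𝒱 and all u,u' ∈ U, ∑_{v∈V} q_{u,v} = ∑_{v∈V} q_{u',v}, where Q = (q_{u,v}) is a generator matrix on dom A. Define the lumped matrix Q̃ on 𝒱 by q̃_{U,V} = ∑_{v∈V} q_{u,v} for any u ∈ U. Then Q̃ is a generator matrix, and for every t ≥ 0, U,V ∈ 𝒱, and u ∈ U: ∑_{v∈V} (exp(tQ))_{u,v} = (exp(tQ̃))_{U,V}. -/

import Mathlib

/-!
Let `L` be the `0/1` matrix of the lump map `π`. Lumpability of `Q` says precisely that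
`Q * L = L * Q̃`, so `Qᵏ * L = L * Q̃ᵏ` for all `k`, and summing the exponential series gives
`exp (t • Q) * L = L * exp (t • Q̃)`. The `(u, V)` entry of the left side is the total mass that
`exp (t • Q)` sends from `u` into the lump `V`; that of the right side is `exp (t • Q̃) (π u) V`.
-/

open Finset

namespace Matrix

variable {R m n : Type*} [Fintype m] [Fintype n] [DecidableEq m] [DecidableEq n]

theorem pow_mul_eq_mul_pow_of_mul_eq_mul [Semiring R] {A : Matrix m m R} {B : Matrix n n R}
    {P : Matrix m n R} (h : A * P = P * B) (k : ℕ) : A ^ k * P = P * B ^ k := by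
  induction k with
  | zero => simp
  | succ k ih =>
    rw [pow_succ, pow_succ, Matrix.mul_assoc, h, ← Matrix.mul_assoc, ih, Matrix.mul_assoc]

attribute [local instance] Matrix.linftyOpNormedRing Matrix.linftyOpNormedAlgebra in
theorem exp_mul_eq_mul_exp_of_mul_eq_mul [RCLike R] {A : Matrix m m R} {B : Matrix n n R}
    {P : Matrix m n R} (h : A * P = P * B) :
    NormedSpace.exp A * P = P * NormedSpace.exp B := by
  have hA := ((NormedSpace.expSeries_summable' (𝕂 := R) A).hasSum.map
    (mulRightLinearMap m R P) (continuous_id.matrix_mul continuous_const))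
  have hB := ((NormedSpace.expSeries_summable' (𝕂 := R) B).hasSum.map
    (mulLeftLinearMap n R P) (continuous_const.matrix_mul continuous_id))
  rw [NormedSpace.exp_eq_tsum R, NormedSpace.exp_eq_tsum R]
  refine hA.unique (hB.congr_fun fun k => ?_)
  simp only [Function.comp_apply, mulRightLinearMap_apply, mulLeftLinearMap_apply, Matrix.smul_mul,
    Matrix.mul_smul, pow_mul_eq_mul_pow_of_mul_eq_mul h]

section Lumping

variable {R α β γ : Type*} [DecidableEq β]

variable (R) in
def lumpingMatrix [Zero R] [One R] (π : α → β) : Matrix α β R :=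
  of fun a W => if π a = W then 1 else 0

theorem lumpingMatrix_mul_apply [NonAssocSemiring R] [Fintype β] {π : α → β} (N : Matrix β γ R)
    (a : α) (c : γ) : (lumpingMatrix R π * N) a c = N (π a) c := by
  simp [mul_apply, lumpingMatrix]

variable [Fintype α]

structure IsGenerator [AddCommMonoid R] [PartialOrder R] (Q : Matrix α α R) : Prop where
  off_diag_nonneg : ∀ u v, u ≠ v → 0 ≤ Q u v
  row_sum_eq_zero : ∀ u, ∑ v, Q u v = 0

def IsLumpable [AddCommMonoid R] (π : α → β) (Q : Matrix α α R) : Prop :=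
  ∀ u u' : α, π u = π u' → ∀ V : β,
    ∑ v ∈ univ.filter (fun v : α => π v = V), Q u v =
      ∑ v ∈ univ.filter (fun v : α => π v = V), Q u' v

/-- `σ` picks a representative of each lump; for a lumpable `Q` the choice does not matter. -/
def lumpedMatrix [AddCommMonoid R] (π : α → β) (σ : β → α) (Q : Matrix α α R) : Matrix β β R :=
  of fun U V => ∑ v ∈ univ.filter (fun v : α => π v = V), Q (σ U) v

theorem mul_lumpingMatrix_apply [NonAssocSemiring R] {π : α → β} (M : Matrix γ α R) (c : γ)
    (W : β) : (M * lumpingMatrix R π) c W = ∑ v ∈ univ.filter (fun v : α => π v = W), M c v := by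
  simp [mul_apply, lumpingMatrix, sum_filter]

theorem IsGenerator.lumpedMatrix [AddCommMonoid R] [PartialOrder R] [IsOrderedAddMonoid R]
    [Fintype β] {π : α → β} {σ : β → α} (hσ : ∀ U, π (σ U) = U) {Q : Matrix α α R}
    (hQ : IsGenerator Q) : IsGenerator (lumpedMatrix π σ Q) where
  off_diag_nonneg U V hUV := sum_nonneg fun v hv =>
    hQ.off_diag_nonneg _ _ fun h => hUV <| by rw [← hσ U, h, (mem_filter.1 hv).2]
  row_sum_eq_zero U := (sum_fiberwise univ π (Q (σ U))).trans (hQ.row_sum_eq_zero (σ U))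

theorem mul_lumpingMatrix_eq_lumpingMatrix_mul_lumpedMatrix [NonAssocSemiring R] [Fintype β]
    {π : α → β} {σ : β → α} (hσ : ∀ U, π (σ U) = U) {Q : Matrix α α R} (hQ : IsLumpable π Q) :
    Q * lumpingMatrix R π = lumpingMatrix R π * lumpedMatrix π σ Q := by
  ext a W
  rw [mul_lumpingMatrix_apply, lumpingMatrix_mul_apply]
  exact hQ a (σ (π a)) (hσ (π a)).symm W

end Lumping

end Matrix

open Matrix

theorem markov_chain_lumping_general
    {α β : Type*} [Fintype α] [Fintype β] [DecidableEq α] [DecidableEq β]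
    (π : α → β)
    (σ : β → α) (hσ : ∀ U : β, π (σ U) = U)
    (Q : Matrix α α ℝ)
    (hQ_off : ∀ u v : α, u ≠ v → 0 ≤ Q u v)
    (hQ_row : ∀ u : α, ∑ v : α, Q u v = 0)
    (hlump : ∀ u u' : α, π u = π u' → ∀ V : β,
      ∑ v ∈ univ.filter (fun v : α => π v = V), Q u v =
        ∑ v ∈ univ.filter (fun v : α => π v = V), Q u' v)
    (Qt : Matrix β β ℝ)
    (hQt : ∀ U V : β, Qt U V = ∑ v ∈ univ.filter (fun v : α => π v = V), Q (σ U) v) :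
    (∀ U V : β, U ≠ V → 0 ≤ Qt U V) ∧
    (∀ U : β, ∑ V : β, Qt U V = 0) ∧
    (∀ t : ℝ, 0 ≤ t → ∀ (u : α) (V : β),
      ∑ v ∈ univ.filter (fun v : α => π v = V), (NormedSpace.exp (t • Q)) u v =
        (NormedSpace.exp (t • Qt)) (π u) V) := by
  obtain rfl : Qt = lumpedMatrix π σ Q := Matrix.ext hQt
  have hQL := mul_lumpingMatrix_eq_lumpingMatrix_mul_lumpedMatrix hσ hlump
  have hQt_gen := IsGenerator.lumpedMatrix hσ ⟨hQ_off, hQ_row⟩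
  refine ⟨hQt_gen.off_diag_nonneg, hQt_gen.row_sum_eq_zero, fun t _ u V => ?_⟩
  have hexp := exp_mul_eq_mul_exp_of_mul_eq_mul (R := ℝ) (P := lumpingMatrix ℝ π)
    (A := t • Q) (B := t • lumpedMatrix π σ Q) (by rw [Matrix.smul_mul, Matrix.mul_smul, hQL])
  simpa only [mul_lumpingMatrix_apply, lumpingMatrix_mul_apply] using congrFun (congrFun hexp u) V

/-- Lumpability of Markov chains.  `dom A` is partitioned into lumps via the
surjective lump-assignment map `π : α → β` (so the lump `V : β` is `π⁻¹{V}`).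
`Q` is a generator matrix on `α` (nonnegative off-diagonal entries, zero row sums)
such that for all `u, u'` in the same lump and every lump `V`,
`∑_{v∈V} Q u v = ∑_{v∈V} Q u' v`.  Define the lumped matrix
`Q̃ U V = ∑_{v∈V} Q u v` for any `u ∈ U` (via a section `σ` of `π`).  Then `Q̃` is a
generator matrix, and for every `t ≥ 0`, every `u` and every lump `V`,
`∑_{v∈V} (exp(tQ))_{u,v} = (exp(tQ̃))_{π u, V}`. -/
theorem markov_chain_lumping
    {α β : Type*} [Fintype α] [Fintype β] [DecidableEq α] [DecidableEq β]
    (π : α → β) (hπ : Function.Surjective π)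
    (σ : β → α) (hσ : ∀ U : β, π (σ U) = U)
    (Q : Matrix α α ℝ)
    (hQ_off : ∀ u v : α, u ≠ v → 0 ≤ Q u v)
    (hQ_row : ∀ u : α, ∑ v : α, Q u v = 0)
    (hlump : ∀ u u' : α, π u = π u' → ∀ V : β,
      ∑ v ∈ univ.filter (fun v : α => π v = V), Q u v =
        ∑ v ∈ univ.filter (fun v : α => π v = V), Q u' v)
    (Qt : Matrix β β ℝ)
    (hQt : ∀ U V : β, Qt U V = ∑ v ∈ univ.filter (fun v : α => π v = V), Q (σ U) v) :
    (∀ U V : β, U ≠ V → 0 ≤ Qt U V) ∧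
    (∀ U : β, ∑ V : β, Qt U V = 0) ∧
    (∀ t : ℝ, 0 ≤ t → ∀ (u : α) (V : β),
      ∑ v ∈ univ.filter (fun v : α => π v = V), (NormedSpace.exp (t • Q)) u v =
        (NormedSpace.exp (t • Qt)) (π u) V) :=
  markov_chain_lumping_general π σ hσ Q hQ_off hQ_row hlump Qt hQt
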